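/- Let t = t_m ∈ (0, 1) satisfy m·t_m² → ∞ as m → ∞. Then ∫_{t_m}^1 (1 − x²)^{m/2} dx = (1/(m·t_m))·(1 − t_m²)^{(m+2)/2}·(1 + o(1)) as m → ∞; that is, the ratio of the integral to (1/(m·t_m))·(1 − t_m²)^{(m+2)/2} converges to 1 as m → ∞. -/

import Mathlib

/-!
Differentiating `(1 - x²)^((a+2)/2) / x` and integrating over `[t, 1]` gives, with
`I = ∫_t^1 (1 - x²)^(a/2)` and `C = ∫_t^1 (1 - x²)^((a+2)/2) / x²`,
`(a + 2) I + C = (1 - t²)^((a+2)/2) / t`. Since `0 ≤ C ≤ I / t²`, the ratio of `I` to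
`(1 - t²)^((a+2)/2) / (a t)` lies between `a / (a + 2 + 1/t²)` and `1`, and the lower bound
tends to `1` as soon as `a t² → ∞`.
-/

open MeasureTheory Filter Set intervalIntegral Topology

section OneSubSqRpow

variable {a t : ℝ}

lemma continuous_one_sub_sq_rpow (ha : 0 ≤ a) : Continuous fun x : ℝ => (1 - x ^ 2) ^ a :=
  (continuous_const.sub (continuous_pow 2)).rpow_const fun _ => Or.inr ha

lemma hasDerivAt_one_sub_sq_rpow_div (ha : 0 ≤ a) {x : ℝ} (hx : x ≠ 0) :
    HasDerivAt (fun y : ℝ => (1 - y ^ 2) ^ ((a + 2) / 2) / y)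
      (-(a + 2) * (1 - x ^ 2) ^ (a / 2) - (1 - x ^ 2) ^ ((a + 2) / 2) / x ^ 2) x := by
  have h := (((hasDerivAt_pow 2 x).const_sub 1).rpow_const (p := (a + 2) / 2)
    (Or.inr (by linarith))).div (hasDerivAt_id x) hx
  refine h.congr_deriv ?_
  rw [show (a + 2) / 2 - 1 = a / 2 by ring]
  simp only [id]
  field_simp
  ring

lemma intervalIntegrable_one_sub_sq_rpow_div_sq (ha : 0 ≤ a) (ht0 : 0 < t) (ht1 : t ≤ 1) :
    IntervalIntegrable (fun x : ℝ => (1 - x ^ 2) ^ a / x ^ 2) volume t 1 := by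
  refine ((continuous_one_sub_sq_rpow ha).continuousOn.div (by fun_prop) ?_).intervalIntegrable
  rintro x hx
  rw [uIcc_of_le ht1] at hx
  exact pow_ne_zero 2 (ht0.trans_le hx.1).ne'

lemma integral_one_sub_sq_rpow_by_parts (ha : 0 ≤ a) (ht0 : 0 < t) (ht1 : t ≤ 1) :
    (a + 2) * (∫ x in t..1, (1 - x ^ 2) ^ (a / 2)) +
        ∫ x in t..1, (1 - x ^ 2) ^ ((a + 2) / 2) / x ^ 2 =
      (1 - t ^ 2) ^ ((a + 2) / 2) / t := by
  have hI := (continuous_one_sub_sq_rpow (a := a / 2) (by positivity)).intervalIntegrable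
    (μ := volume) t 1
  have hC := intervalIntegrable_one_sub_sq_rpow_div_sq (a := (a + 2) / 2) (by positivity) ht0 ht1
  have hne : ∀ x ∈ uIcc t 1, x ≠ 0 := fun x hx => by
    rw [uIcc_of_le ht1] at hx
    exact (ht0.trans_le hx.1).ne'
  have hFTC := integral_eq_sub_of_hasDerivAt
    (fun x hx => hasDerivAt_one_sub_sq_rpow_div ha (hne x hx)) ((hI.const_mul (-(a + 2))).sub hC)
  rw [integral_sub (hI.const_mul _) hC, intervalIntegral.integral_const_mul] at hFTC
  norm_num [Real.zero_rpow (show (a + 2) / 2 ≠ 0 by positivity)] at hFTC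
  linarith

lemma integral_one_sub_sq_rpow_div_sq_le (ha : 0 ≤ a) (ht0 : 0 < t) (ht1 : t ≤ 1) :
    ∫ x in t..1, (1 - x ^ 2) ^ ((a + 2) / 2) / x ^ 2 ≤
      (∫ x in t..1, (1 - x ^ 2) ^ (a / 2)) / t ^ 2 := by
  rw [← intervalIntegral.integral_div]
  refine integral_mono_on ht1
    (intervalIntegrable_one_sub_sq_rpow_div_sq (by positivity) ht0 ht1)
    (((continuous_one_sub_sq_rpow (by positivity)).intervalIntegrable t 1).div_const _) ?_
  rintro x ⟨htx, hx1⟩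
  have hx : 0 ≤ 1 - x ^ 2 := by nlinarith
  exact div_le_div₀ (by positivity)
    (Real.rpow_le_rpow_of_exponent_ge' hx (by nlinarith) (by positivity) (by linarith))
    (by positivity) (by nlinarith)

lemma integral_one_sub_sq_rpow_div_mem_Icc (ha : 0 < a) (ht0 : 0 < t) (ht1 : t < 1) :
    (∫ x in t..1, (1 - x ^ 2) ^ (a / 2)) / (1 / (a * t) * (1 - t ^ 2) ^ ((a + 2) / 2)) ∈
      Icc (a / (a + 2 + 1 / t ^ 2)) 1 := by
  have hid := integral_one_sub_sq_rpow_by_parts ha.le ht0 ht1.le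
  have hCle := integral_one_sub_sq_rpow_div_sq_le ha.le ht0 ht1.le
  have hC0 : 0 ≤ ∫ x in t..1, (1 - x ^ 2) ^ ((a + 2) / 2) / x ^ 2 :=
    integral_nonneg ht1.le fun x hx => by
      have : 0 ≤ 1 - x ^ 2 := by nlinarith [hx.1, hx.2]
      positivity
  have hB : 0 < (1 - t ^ 2) ^ ((a + 2) / 2) := Real.rpow_pos_of_pos (by nlinarith) _
  set I := ∫ x in t..1, (1 - x ^ 2) ^ (a / 2)
  set C := ∫ x in t..1, (1 - x ^ 2) ^ ((a + 2) / 2) / x ^ 2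
  set B := (1 - t ^ 2) ^ ((a + 2) / 2)
  have hBt : 0 < B / t := by positivity
  have hI : 0 < I := by
    by_contra! hI
    have : I / t ^ 2 ≤ 0 := div_nonpos_of_nonpos_of_nonneg hI (by positivity)
    nlinarith
  have hden : 1 / (a * t) * B = ((a + 2) * I + C) / a := by
    rw [hid]; field_simp
  have hS : 0 < (a + 2) * I + C := by positivity
  rw [hden, mem_Icc, div_div_eq_mul_div, div_le_div_iff₀ (by positivity) hS, div_le_one hS]
  constructor
  · have : C * t ^ 2 ≤ I := by rwa [le_div_iff₀ (by positivity)] at hCle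
    field_simp
    nlinarith
  · nlinarith

end OneSubSqRpow

lemma tendsto_div_add_two_add_inv_sq {t : ℕ → ℝ}
    (hmt : Tendsto (fun m : ℕ => (m : ℝ) * t m ^ 2) atTop atTop) :
    Tendsto (fun m : ℕ => (m : ℝ) / (m + 2 + 1 / t m ^ 2)) atTop (𝓝 1) := by
  have hm : Tendsto (fun m : ℕ => (m : ℝ)) atTop atTop := tendsto_natCast_atTop_atTop
  have h := ((tendsto_const_nhds (x := (1 : ℝ))).add
    (tendsto_const_nhds (x := (2 : ℝ)).div_atTop hm)
    |>.add (tendsto_const_nhds (x := (1 : ℝ)).div_atTop hmt)).inv₀ (by norm_num)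
  rw [show ((1 : ℝ) + 0 + 0)⁻¹ = 1 by norm_num] at h
  refine h.congr' ?_
  filter_upwards [hmt.eventually_gt_atTop 0] with m hpos
  have hm0 : (m : ℝ) ≠ 0 := by rintro h; simp [h] at hpos
  have ht0 : t m ≠ 0 := by rintro h; simp [h] at hpos
  field_simp

/-- If `t_m ∈ (0,1)` and `m t_m² → ∞`, then
`∫_{t_m}^1 (1-x²)^{m/2} dx = (1/(m t_m)) (1-t_m²)^{(m+2)/2} (1+o(1))` as `m → ∞`,
i.e. the ratio of the two sides tends to `1`. -/
theorem integral_one_sub_sq_rpow_asymptotic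
    (t : ℕ → ℝ) (ht : ∀ m, t m ∈ Set.Ioo (0 : ℝ) 1)
    (hmt : Tendsto (fun m : ℕ => (m : ℝ) * t m ^ 2) atTop atTop) :
    Tendsto (fun m : ℕ =>
        (∫ x in (t m)..1, (1 - x ^ 2) ^ ((m : ℝ) / 2)) /
          (1 / ((m : ℝ) * t m) * (1 - t m ^ 2) ^ (((m : ℝ) + 2) / 2)))
      atTop (nhds 1) := by
  have hbounds : ∀ᶠ m : ℕ in atTop, _ :=
    (eventually_gt_atTop 0).mono fun m hm =>
      integral_one_sub_sq_rpow_div_mem_Icc (a := m) (by positivity) (ht m).1 (ht m).2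
  exact tendsto_of_tendsto_of_tendsto_of_le_of_le' (tendsto_div_add_two_add_inv_sq hmt)
    tendsto_const_nhds (hbounds.mono fun _ h => h.1) (hbounds.mono fun _ h => h.2)
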